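/- arXiv:1209.0736 — 5 statements merged into one kernel-verified Lean document; each statement's English description precedes it below -/
import Mathlib

section
/- With B and B* as defined, B · B* equals the W×W identity matrix; consequently B is invertible and B⁻¹ = B*. -/
/-!
Both matrices factor through the (index-shifted) Pascal matrices `P(a)_{ji} = C(i,j) a^{i-j}`:
`B = diag(p^j) P(q) diag(1 - q^i)⁻¹` and `B* = diag(1 - q^j) P(-q) diag(p^i)⁻¹`.
By `C(k,j) C(i,k) = C(i,j) C(i-j,k-j)` and the binomial theorem, `a ↦ P(a)` is a one-parameter
group, `P(a) P(b) = P(a + b)`; hence `P(q) P(-q) = P(0) = 1`, and the diagonal factors cancel in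
pairs.
-/

open Finset Matrix

variable {R : Type*} [CommRing R]

/-- Row and column `j : Fin n` stand for the index `j + 1`. The truncated subtraction in the
exponent is harmless, since the binomial coefficient vanishes when `j > i`. -/
def pascalMatrix (n : ℕ) (a : R) : Matrix (Fin n) (Fin n) R :=
  of fun j i => (((i : ℕ) + 1).choose ((j : ℕ) + 1) : R) * a ^ ((i : ℕ) - j)

lemma sum_choose_succ_mul_choose_succ_mul_pow (a b : R) {n j l : ℕ} (hl : l < n) :
    ∑ k ∈ range n, ((k + 1).choose (j + 1) : R) * a ^ (k - j) *
        (((l + 1).choose (k + 1) : R) * b ^ (l - k)) =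
      ((l + 1).choose (j + 1) : R) * (a + b) ^ (l - j) := by
  have hsupport : Ico j (l + 1) ⊆ range n := fun k hk => by
    simp only [mem_Ico, mem_range] at hk ⊢; omega
  rw [← sum_subset hsupport fun k _ hk => ?vanish]
  case vanish =>
    simp only [mem_Ico, not_and_or, not_le, not_lt] at hk
    rcases hk with hkj | hlk
    · simp [Nat.choose_eq_zero_of_lt (show k + 1 < j + 1 by omega)]
    · simp [Nat.choose_eq_zero_of_lt (show l + 1 < k + 1 by omega)]
  rcases lt_or_ge l j with hlj | hjl
  · rw [Ico_eq_empty (by omega), sum_empty, Nat.choose_eq_zero_of_lt (by omega), Nat.cast_zero,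
      zero_mul]
  rw [sum_Ico_eq_sum_range, show l + 1 - j = l - j + 1 by omega, add_pow, mul_sum]
  refine sum_congr rfl fun t ht => ?_
  have ht : t ≤ l - j := by simp only [mem_range] at ht; omega
  have hchoose : ((j + t + 1).choose (j + 1) : R) * ((l + 1).choose (j + t + 1) : R) =
      ((l + 1).choose (j + 1) : R) * ((l - j).choose t : R) := by
    have h := Nat.choose_mul (n := l + 1) (k := j + t + 1) (s := j + 1) (by omega)
    rw [show l + 1 - (j + 1) = l - j by omega, show j + t + 1 - (j + 1) = t by omega,
      mul_comm] at h
    simpa only [Nat.cast_mul] using congrArg (Nat.cast : ℕ → R) h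
  rw [Nat.add_sub_cancel_left, show l - (j + t) = l - j - t by omega]
  linear_combination (a ^ t * b ^ (l - j - t)) * hchoose

lemma pascalMatrix_mul (n : ℕ) (a b : R) :
    pascalMatrix n a * pascalMatrix n b = pascalMatrix n (a + b) := by
  ext j l
  simp only [mul_apply, pascalMatrix, of_apply]
  rw [Fin.sum_univ_eq_sum_range (fun k => ((k + 1).choose ((j : ℕ) + 1) : R) * a ^ (k - j) *
    ((((l : ℕ) + 1).choose (k + 1) : R) * b ^ ((l : ℕ) - k))) n]
  exact sum_choose_succ_mul_choose_succ_mul_pow a b l.isLt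

lemma pascalMatrix_zero (n : ℕ) : pascalMatrix n (0 : R) = 1 := by
  ext j i
  simp only [pascalMatrix, of_apply, one_apply, Fin.ext_iff]
  rcases lt_trichotomy (j : ℕ) i with hji | hji | hij
  · simp [zero_pow (show (i : ℕ) - j ≠ 0 by omega), hji.ne]
  · simp [hji]
  · simp [Nat.choose_eq_zero_of_lt (show (i : ℕ) + 1 < j + 1 by omega), hij.ne']

lemma pascalMatrix_mul_neg (n : ℕ) (a : R) : pascalMatrix n a * pascalMatrix n (-a) = 1 := by
  rw [pascalMatrix_mul, add_neg_cancel, pascalMatrix_zero]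

lemma diagonal_mul_diagonal_eq_one {n S : Type*} [Fintype n] [DecidableEq n] [Semiring S]
    {d e : n → S} (h : ∀ i, d i * e i = 1) : diagonal d * diagonal e = 1 := by
  rw [diagonal_mul_diagonal, ← diagonal_one]
  exact congrArg diagonal (funext h)

lemma conj_pascalMatrix_mul_conj_pascalMatrix_neg {K : Type*} [Field K] {n : ℕ}
    {d e : Fin n → K} (hd : ∀ i, d i ≠ 0) (he : ∀ i, e i ≠ 0) (a : K) :
    diagonal d * pascalMatrix n a * diagonal e⁻¹ *
      (diagonal e * pascalMatrix n (-a) * diagonal d⁻¹) = 1 := by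
  calc diagonal d * pascalMatrix n a * diagonal e⁻¹ *
        (diagonal e * pascalMatrix n (-a) * diagonal d⁻¹)
      = diagonal d * pascalMatrix n a * (diagonal e⁻¹ * diagonal e) *
          pascalMatrix n (-a) * diagonal d⁻¹ := by simp only [Matrix.mul_assoc]
    _ = diagonal d * diagonal d⁻¹ := by
      rw [diagonal_mul_diagonal_eq_one (d := e⁻¹) fun i => inv_mul_cancel₀ (he i),
        Matrix.mul_one, Matrix.mul_assoc (diagonal d), pascalMatrix_mul_neg, Matrix.mul_one]
    _ = 1 := diagonal_mul_diagonal_eq_one (e := d⁻¹) fun i => mul_inv_cancel₀ (hd i)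

theorem stmt_0_general (W : ℕ) (p q : ℝ) (hp0 : 0 < p) (hp1 : p < 1) (hq : q = 1 - p)
    (B Bs : Matrix (Fin W) (Fin W) ℝ)
    (hB : ∀ j i : Fin W, B j i =
      if (j : ℕ) ≤ (i : ℕ) then
        (((i : ℕ) + 1).choose ((j : ℕ) + 1) : ℝ) * p ^ ((j : ℕ) + 1) * q ^ ((i : ℕ) - (j : ℕ))
          / (1 - q ^ ((i : ℕ) + 1))
      else 0)
    (hBs : ∀ j i : Fin W, Bs j i =
      if (j : ℕ) ≤ (i : ℕ) then
        (((i : ℕ) + 1).choose ((j : ℕ) + 1) : ℝ) * (-q) ^ ((i : ℕ) - (j : ℕ))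
          * (1 - q ^ ((j : ℕ) + 1)) / p ^ ((i : ℕ) + 1)
      else 0) :
    B * Bs = 1 ∧ IsUnit B ∧ B⁻¹ = Bs := by
  set dp : Fin W → ℝ := fun i => p ^ ((i : ℕ) + 1)
  set dq : Fin W → ℝ := fun i => 1 - q ^ ((i : ℕ) + 1)
  have hdp : ∀ i, dp i ≠ 0 := fun i => pow_ne_zero _ hp0.ne'
  have hdq : ∀ i, dq i ≠ 0 := fun i =>
    (sub_pos.2 (pow_lt_one₀ (by linarith) (by linarith) (Nat.succ_ne_zero _))).ne'
  have hBfac : B = diagonal dp * pascalMatrix W q * diagonal dq⁻¹ := by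
    ext j i
    simp only [hB, mul_diagonal, diagonal_mul, pascalMatrix, of_apply, Pi.inv_apply, dp, dq]
    split_ifs with hji
    · ring
    · simp [Nat.choose_eq_zero_of_lt (show (i : ℕ) + 1 < j + 1 by omega)]
  have hBsfac : Bs = diagonal dq * pascalMatrix W (-q) * diagonal dp⁻¹ := by
    ext j i
    simp only [hBs, mul_diagonal, diagonal_mul, pascalMatrix, of_apply, Pi.inv_apply, dp, dq]
    split_ifs with hji
    · ring
    · simp [Nat.choose_eq_zero_of_lt (show (i : ℕ) + 1 < j + 1 by omega)]
  have hmul : B * Bs = 1 := by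
    rw [hBfac, hBsfac]
    exact conj_pascalMatrix_mul_conj_pascalMatrix_neg hdp hdq q
  exact ⟨hmul, (isUnit_iff_isUnit_det B).2 (isUnit_det_of_right_inverse hmul),
    inv_eq_right_inv hmul⟩

/-- With `B` and `B*` as defined, `B · B*` equals the `W×W` identity matrix; consequently
`B` is invertible and `B⁻¹ = B*`. Indices `j, i` range over `1,…,W`; the `Fin W` index `j`
corresponds to the mathematical index `j+1`. -/
theorem stmt_0 (W : ℕ) (hW : 1 ≤ W) (p q : ℝ) (hp0 : 0 < p) (hp1 : p < 1) (hq : q = 1 - p)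
    (B Bs : Matrix (Fin W) (Fin W) ℝ)
    (hB : ∀ j i : Fin W, B j i =
      if (j : ℕ) ≤ (i : ℕ) then
        (((i : ℕ) + 1).choose ((j : ℕ) + 1) : ℝ) * p ^ ((j : ℕ) + 1) * q ^ ((i : ℕ) - (j : ℕ))
          / (1 - q ^ ((i : ℕ) + 1))
      else 0)
    (hBs : ∀ j i : Fin W, Bs j i =
      if (j : ℕ) ≤ (i : ℕ) then
        (((i : ℕ) + 1).choose ((j : ℕ) + 1) : ℝ) * (-q) ^ ((i : ℕ) - (j : ℕ))
          * (1 - q ^ ((j : ℕ) + 1)) / p ^ ((i : ℕ) + 1)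
      else 0) :
    B * Bs = 1 ∧ IsUnit B ∧ B⁻¹ = Bs :=
  stmt_0_general W p q hp0 hp1 hq B Bs hB hBs
end

section
/- For all integers i, j ≥ 0 and every real x > 0, ∑_{k=0}^{j} C(i+k,i) C(j,k) x^{k+i} = (x^i / i!) ∑_{k=0}^{min(i,j)} C(i,k) (1+x)^{j−k} x^k · (j!/(j−k)!) · (i!/k!). -/
/-!
Vandermonde's identity `C(i+n, i) = ∑ₖ C(i,k) C(n,k)` turns the left-hand side into a double sum;
exchanging the order of summation leaves the inner sums `∑ₙ C(n,k) C(j,n) xⁿ = C(j,k) xᵏ (1+x)^(j-k)`,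
which follow from `C(j,n) C(n,k) = C(j,k) C(j-k,n-k)` and the binomial theorem.
This gives `∑ₙ C(i+n,i) C(j,n) xⁿ = ∑ₖ C(i,k) C(j,k) xᵏ (1+x)^(j-k)` in any commutative semiring,
and the stated form comes from writing `C(j,k) = j! / (k! (j-k)!)`.
-/

open Finset

theorem Nat.add_choose_eq_sum_range_choose_mul_choose (i : ℕ) {n m : ℕ} (hnm : n ≤ m) :
    (i + n).choose i = ∑ k ∈ range (m + 1), i.choose k * n.choose k := by
  have hvandermonde : (i + n).choose i = ∑ k ∈ range (n + 1), i.choose k * n.choose k := by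
    rw [Nat.choose_symm_add, Nat.add_choose_eq, Nat.sum_antidiagonal_eq_sum_range_succ_mk]
    refine sum_congr rfl fun k hk => ?_
    rw [Nat.choose_symm (Nat.lt_succ_iff.mp (mem_range.mp hk))]
  rw [hvandermonde]
  refine sum_subset (range_subset_range.2 (by omega)) fun k _ hk => ?_
  rw [Nat.choose_eq_zero_of_lt (n := n) (by simpa using hk), Nat.mul_zero]

variable {R : Type*} [CommSemiring R]

theorem sum_range_choose_mul_choose_mul_pow {j k : ℕ} (hkj : k ≤ j) (x : R) :
    ∑ n ∈ range (j + 1), (n.choose k : R) * j.choose n * x ^ n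
      = j.choose k * x ^ k * (1 + x) ^ (j - k) := by
  have hsplit : j + 1 = k + (j - k + 1) := by omega
  rw [hsplit, sum_range_add, add_comm 1 x, add_pow, mul_sum]
  have hlow : ∑ n ∈ range k, (n.choose k : R) * j.choose n * x ^ n = 0 :=
    sum_eq_zero fun n hn => by rw [Nat.choose_eq_zero_of_lt (mem_range.mp hn)]; simp
  rw [hlow, zero_add]
  refine sum_congr rfl fun m _ => ?_
  have hchoose : (k + m).choose k * j.choose (k + m) = j.choose k * (j - k).choose m := by
    simpa [mul_comm] using Nat.choose_mul (n := j) (k := k + m) (s := k) (Nat.le_add_right k m)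
  rw [one_pow, mul_one, pow_add, ← Nat.cast_mul, hchoose]
  push_cast
  ring

theorem sum_range_add_choose_mul_choose_mul_pow (i j : ℕ) (x : R) :
    ∑ n ∈ range (j + 1), ((i + n).choose i : R) * j.choose n * x ^ n
      = ∑ k ∈ range (j + 1), (i.choose k : R) * j.choose k * x ^ k * (1 + x) ^ (j - k) :=
  calc ∑ n ∈ range (j + 1), ((i + n).choose i : R) * j.choose n * x ^ n
      = ∑ n ∈ range (j + 1), ∑ k ∈ range (j + 1),
          (i.choose k : R) * ((n.choose k : R) * j.choose n * x ^ n) := by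
        refine sum_congr rfl fun n hn => ?_
        rw [Nat.add_choose_eq_sum_range_choose_mul_choose i (Nat.lt_succ_iff.mp (mem_range.mp hn))]
        push_cast
        rw [sum_mul, sum_mul]
        exact sum_congr rfl fun k _ => by ring
    _ = ∑ k ∈ range (j + 1), (i.choose k : R) *
          ∑ n ∈ range (j + 1), (n.choose k : R) * j.choose n * x ^ n := by
        rw [sum_comm]
        simp only [mul_sum]
    _ = _ := by
        refine sum_congr rfl fun k hk => ?_
        rw [sum_range_choose_mul_choose_mul_pow (Nat.lt_succ_iff.mp (mem_range.mp hk))]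
        ring

theorem stmt_4_general (i j : ℕ) (x : ℝ) :
    ∑ k ∈ Finset.range (j + 1), ((i + k).choose i : ℝ) * (j.choose k : ℝ) * x ^ (k + i) =
      (x ^ i / (i.factorial : ℝ)) * ∑ k ∈ Finset.range (min i j + 1),
        (i.choose k : ℝ) * (1 + x) ^ (j - k) * x ^ k *
          ((j.factorial : ℝ) / ((j - k).factorial : ℝ)) *
          ((i.factorial : ℝ) / (k.factorial : ℝ)) := by
  have hterms_vanish : ∀ k ∈ range (j + 1), k ∉ range (min i j + 1) →
      (i.choose k : ℝ) * j.choose k * x ^ k * (1 + x) ^ (j - k) = 0 := fun k hkj hki => by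
    rw [Nat.choose_eq_zero_of_lt (n := i) (by simp only [mem_range] at hkj hki; omega)]
    simp
  calc _ = x ^ i * ∑ n ∈ range (j + 1), ((i + n).choose i : ℝ) * j.choose n * x ^ n := by
        rw [mul_sum]
        exact sum_congr rfl fun n _ => by ring
    _ = x ^ i * ∑ k ∈ range (min i j + 1),
          (i.choose k : ℝ) * j.choose k * x ^ k * (1 + x) ^ (j - k) := by
        rw [sum_range_add_choose_mul_choose_mul_pow,
          sum_subset (range_subset_range.2 (by omega)) hterms_vanish]
    _ = _ := by
        rw [mul_sum, mul_sum]
        refine sum_congr rfl fun k hk => ?_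
        have hkj : k ≤ j := by simp only [mem_range] at hk; omega
        rw [Nat.cast_choose ℝ hkj]
        field_simp

theorem stmt_4 (i j : ℕ) (x : ℝ) (hx : 0 < x) :
    ∑ k ∈ Finset.range (j + 1), ((i + k).choose i : ℝ) * (j.choose k : ℝ) * x ^ (k + i) =
      (x ^ i / (i.factorial : ℝ)) * ∑ k ∈ Finset.range (min i j + 1),
        (i.choose k : ℝ) * (1 + x) ^ (j - k) * x ^ k *
          ((j.factorial : ℝ) / ((j - k).factorial : ℝ)) *
          ((i.factorial : ℝ) / (k.factorial : ℝ)) :=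
  stmt_4_general i j x
end

section
/- For every i ∈ {1,…,W}, ∑_{k=1}^{W} C(k,i) (−q/p)^k d_k = (−q)^i η θ_i. -/
/-!
Substituting `d` and exchanging the sums, the factor `(-q/p)^k` cancels `p^k` and turns
`C(m,k) p^k q^(m-k)` into `(-1)^k C(m,k) q^m`. The remaining sum `∑ₖ C(k,i) (-1)^k C(m,k)` is the
coefficient of `X^i` in `(1 - (1 + X))^m = (-X)^m`, i.e. `(-1)^i` if `m = i` and `0` otherwise, so
only the `m = i` term `(-q)^i φ_i / (1 - q^i)` survives; this is `(-q)^i η θ_i` because `η > 0`.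
-/

open Finset Polynomial

theorem sum_range_choose_mul_neg_one_pow_mul_choose (R : Type*) [CommRing R] (m i : ℕ) :
    ∑ k ∈ range (m + 1), (k.choose i : R) * (-1) ^ k * m.choose k =
      if i = m then (-1) ^ m else 0 := by
  have hX : (X + 1) * C (-1) + 1 = (X : R[X]) * C (-1) := by simp
  have h := congrArg (coeff · i) (add_pow ((X + 1) * C (-1) : R[X]) 1 m)
  simp only [hX, mul_pow, ← C_pow, coeff_mul_C, coeff_X_pow, one_pow, mul_one, finsetSum_coeff,
    coeff_mul_natCast, coeff_X_add_one_pow, ite_mul, one_mul, zero_mul] at h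
  exact h.symm

theorem sum_range_choose_mul_neg_div_pow_mul_sum_binomial {K : Type*} [Field K] {p : K}
    (hp : p ≠ 0) (q : K) (ψ : ℕ → K) {W i : ℕ} (hi : i ≤ W) :
    ∑ k ∈ range (W + 1), (k.choose i : K) * (-q / p) ^ k *
        ∑ m ∈ Icc k W, (m.choose k : K) * p ^ k * q ^ (m - k) * ψ m =
      (-q) ^ i * ψ i := by
  have hterm : ∀ m, ∀ k ≤ m,
      (k.choose i : K) * (-q / p) ^ k * ((m.choose k : K) * p ^ k * q ^ (m - k) * ψ m) =
        (k.choose i : K) * (-1) ^ k * m.choose k * (q ^ m * ψ m) := by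
    intro m k hk
    rw [div_pow, neg_pow, ← pow_mul_pow_sub q hk]
    field_simp
  calc ∑ k ∈ range (W + 1), (k.choose i : K) * (-q / p) ^ k *
          ∑ m ∈ Icc k W, (m.choose k : K) * p ^ k * q ^ (m - k) * ψ m
      = ∑ m ∈ range (W + 1), ∑ k ∈ range (m + 1), (k.choose i : K) * (-q / p) ^ k *
          ((m.choose k : K) * p ^ k * q ^ (m - k) * ψ m) := by
        simp_rw [mul_sum]
        exact sum_comm' fun k m => by simp only [mem_range, mem_Icc]; omega
    _ = ∑ m ∈ range (W + 1), (if i = m then (-1) ^ m else 0) * (q ^ m * ψ m) := by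
        refine sum_congr rfl fun m _ => ?_
        rw [← sum_range_choose_mul_neg_one_pow_mul_choose, sum_mul]
        exact sum_congr rfl fun k hk => hterm m k (Nat.lt_succ_iff.mp (mem_range.mp hk))
    _ = (-q) ^ i * ψ i := by
        simp only [ite_mul, zero_mul, sum_ite_eq, mem_range, Nat.lt_succ_iff.mpr hi, if_true]
        ring

theorem stmt_9_general
    (W : ℕ) (p q : ℝ) (hp0 : 0 < p) (hp1 : p < 1) (hq : q = 1 - p)
    (B : ℕ → ℕ → ℝ)
    (hB : ∀ j i, B j i = if j ≤ i then
      (i.choose j : ℝ) * p ^ j * q ^ (i - j) / (1 - q ^ i) else 0)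
    (φ : ℕ → ℝ) (hφ : ∀ i ∈ Finset.Icc 1 W, 0 < φ i)
    (d : ℕ → ℝ) (hd : ∀ k, d k = ∑ i ∈ Finset.Icc k W, B k i * φ i)
    (η : ℝ) (hη : η = ∑ k ∈ Finset.Icc 1 W, φ k / (1 - q ^ k))
    (θ : ℕ → ℝ) (hθ : ∀ i, θ i = φ i / (η * (1 - q ^ i)))
    : ∀ i ∈ Finset.Icc 1 W,
      ∑ k ∈ Finset.Icc 1 W, (k.choose i : ℝ) * (-q / p) ^ k * d k = (-q) ^ i * η * θ i := by
  intro i hi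
  obtain ⟨hi1, hiW⟩ := mem_Icc.mp hi
  have hq_pow_lt : ∀ k ≠ 0, q ^ k < 1 := fun k hk =>
    pow_lt_one₀ (by linarith) (by linarith) hk
  have hη0 : η ≠ 0 := by
    refine hη ▸ (sum_pos (fun k hk => div_pos (hφ k hk) ?_) ⟨i, hi⟩).ne'
    exact sub_pos.mpr (hq_pow_lt k (by simp at hk; omega))
  have hd' : ∀ k,
      d k = ∑ m ∈ Icc k W, (m.choose k : ℝ) * p ^ k * q ^ (m - k) * (φ m / (1 - q ^ m)) := by
    intro k
    refine (hd k).trans (sum_congr rfl fun m hm => ?_)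
    rw [hB, if_pos (mem_Icc.mp hm).1]
    ring
  calc ∑ k ∈ Icc 1 W, (k.choose i : ℝ) * (-q / p) ^ k * d k
      = ∑ k ∈ range (W + 1), (k.choose i : ℝ) * (-q / p) ^ k * d k := by
        refine sum_subset (fun k hk => by simp at hk ⊢; omega) fun k hk hk' => ?_
        obtain rfl : k = 0 := by simp at hk hk'; omega
        simp [Nat.choose_eq_zero_of_lt hi1]
    _ = (-q) ^ i * (φ i / (1 - q ^ i)) := by
        simp_rw [hd']
        exact sum_range_choose_mul_neg_div_pow_mul_sum_binomial hp0.ne' q _ hiW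
    _ = (-q) ^ i * η * θ i := by
        rw [hθ]
        field_simp

theorem stmt_9
    (W : ℕ) (hW : 1 ≤ W) (p q : ℝ) (hp0 : 0 < p) (hp1 : p < 1) (hq : q = 1 - p)
    (B : ℕ → ℕ → ℝ)
    (hB : ∀ j i, B j i = if j ≤ i then
      (i.choose j : ℝ) * p ^ j * q ^ (i - j) / (1 - q ^ i) else 0)
    (φ : ℕ → ℝ) (hφ : ∀ i ∈ Finset.Icc 1 W, 0 < φ i)
    (d : ℕ → ℝ) (hd : ∀ k, d k = ∑ i ∈ Finset.Icc k W, B k i * φ i)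
    (η : ℝ) (hη : η = ∑ k ∈ Finset.Icc 1 W, φ k / (1 - q ^ k))
    (θ : ℕ → ℝ) (hθ : ∀ i, θ i = φ i / (η * (1 - q ^ i)))
    : ∀ i ∈ Finset.Icc 1 W,
      ∑ k ∈ Finset.Icc 1 W, (k.choose i : ℝ) * (-q / p) ^ k * d k = (-q) ^ i * η * θ i :=
  stmt_9_general W p q hp0 hp1 hq B hB φ hφ d hd η hη θ hθ
end

section
/- ∑_{k=1}^{W} (q/p)^{2k} d_k = η ( ∑_{j=1}^W (q/p)^j θ_j − ∑_{j=1}^W q^j θ_j ). -/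
open Finset

/-!
Exchanging the order of summation, the left side becomes a sum over columns `i`, each
column carrying the common factor `φ i / (1 - q ^ i)` of `B · i`. What is left in
column `i` is a binomial sum: since `q² / p + q = q / p`,
`∑_{k=1}^i C(i,k) (q/p)^{2k} p^k q^{i-k} = (q²/p + q)^i - q^i = (q/p)^i - q^i`.
On the right, `η θ_j = φ_j / (1 - q^j)` as soon as `η ≠ 0`, which holds because all
its summands are positive.
-/

theorem sum_Icc_sum_Icc_comm {M : Type*} [AddCommMonoid M] (a n : ℕ) (f : ℕ → ℕ → M) :
    ∑ k ∈ Icc a n, ∑ i ∈ Icc k n, f k i = ∑ i ∈ Icc a n, ∑ k ∈ Icc a i, f k i :=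
  sum_comm' fun k i => by simp only [mem_Icc]; omega

theorem sum_Icc_div_pow_two_mul_choose_mul {K : Type*} [Field K] {p q : K} (hp : p ≠ 0)
    (hpq : p + q = 1) (i : ℕ) :
    ∑ k ∈ Icc 1 i, (q / p) ^ (2 * k) * ((i.choose k : K) * p ^ k * q ^ (i - k)) =
      (q / p) ^ i - q ^ i := by
  have hbase : q ^ 2 / p + q = q / p := by
    field_simp
    linear_combination q * hpq
  calc ∑ k ∈ Icc 1 i, (q / p) ^ (2 * k) * ((i.choose k : K) * p ^ k * q ^ (i - k))
      = ∑ k ∈ Icc 1 i, (q ^ 2 / p) ^ k * q ^ (i - k) * i.choose k := by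
        refine sum_congr rfl fun k _ => ?_
        rw [pow_mul, div_pow, div_pow, div_pow]
        field_simp
        ring
    _ = (q ^ 2 / p + q) ^ i - q ^ i := by
        rw [add_pow, ← Nat.Ico_zero_eq_range, sum_eq_sum_Ico_succ_bot i.succ_pos,
          zero_add, Nat.succ_eq_add_one, Ico_add_one_right_eq_Icc]
        simp
    _ = (q / p) ^ i - q ^ i := by rw [hbase]

theorem stmt_10
    (W : ℕ) (hW : 1 ≤ W) (p q : ℝ) (hp0 : 0 < p) (hp1 : p < 1) (hq : q = 1 - p)
    (B : ℕ → ℕ → ℝ)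
    (hB : ∀ j i, B j i = if j ≤ i then
      (i.choose j : ℝ) * p ^ j * q ^ (i - j) / (1 - q ^ i) else 0)
    (φ : ℕ → ℝ) (hφ : ∀ i ∈ Finset.Icc 1 W, 0 < φ i)
    (d : ℕ → ℝ) (hd : ∀ k, d k = ∑ i ∈ Finset.Icc k W, B k i * φ i)
    (η : ℝ) (hη : η = ∑ k ∈ Finset.Icc 1 W, φ k / (1 - q ^ k))
    (θ : ℕ → ℝ) (hθ : ∀ i, θ i = φ i / (η * (1 - q ^ i)))
    : ∑ k ∈ Finset.Icc 1 W, (q / p) ^ (2 * k) * d k =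
      η * (∑ j ∈ Finset.Icc 1 W, (q / p) ^ j * θ j - ∑ j ∈ Finset.Icc 1 W, q ^ j * θ j) := by
  have hden : ∀ i ∈ Icc 1 W, 0 < 1 - q ^ i := fun i hi =>
    sub_pos.2 (pow_lt_one₀ (by linarith) (by linarith) (by simp at hi; omega))
  have hη0 : η ≠ 0 := by
    rw [hη]
    exact (sum_pos (fun i hi => div_pos (hφ i hi) (hden i hi)) ⟨1, by simpa using hW⟩).ne'
  calc ∑ k ∈ Icc 1 W, (q / p) ^ (2 * k) * d k
      = ∑ i ∈ Icc 1 W, ∑ k ∈ Icc 1 i, (q / p) ^ (2 * k) * (B k i * φ i) := by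
        simp only [hd, mul_sum]
        exact sum_Icc_sum_Icc_comm 1 W _
    _ = ∑ i ∈ Icc 1 W, ((q / p) ^ i - q ^ i) * (φ i / (1 - q ^ i)) := by
        refine sum_congr rfl fun i _ => ?_
        rw [← sum_Icc_div_pow_two_mul_choose_mul hp0.ne' (by linarith) i, sum_mul]
        refine sum_congr rfl fun k hk => ?_
        rw [hB, if_pos (mem_Icc.1 hk).2]
        ring
    _ = η * (∑ j ∈ Icc 1 W, (q / p) ^ j * θ j - ∑ j ∈ Icc 1 W, q ^ j * θ j) := by
        rw [← sum_sub_distrib, mul_sum]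
        refine sum_congr rfl fun j _ => ?_
        rw [hθ]
        field_simp
end

section
/- ∑_{i=1}^W i·φ_i = (1/p) ∑_{k=1}^W k·d_k + (1 − 1/p)·d_1. -/
/-!
After swapping the order of summation, the coefficient of `φ i` on the right is
`(1/p) E[K] + (1 - 1/p) P(K = 1)` for `K` a binomial `Bin(i, p)` variable conditioned on `K ≥ 1`.
Its mean is `i p / (1 - q^i)` and `P(K = 1) = i p q^(i-1) / (1 - q^i)`, so the coefficient is
`i (1 - q^i) / (1 - q^i) = i`.
-/

open Finset

theorem sum_range_mul_choose_mul_pow_mul_pow {R : Type*} [CommSemiring R] (n : ℕ) (x y : R) :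
    ∑ k ∈ range (n + 1), (k : R) * n.choose k * x ^ k * y ^ (n - k) = n * x * (x + y) ^ (n - 1) := by
  cases n with
  | zero => simp
  | succ m =>
    rw [sum_range_succ', Nat.add_sub_cancel, add_pow, mul_sum]
    simp only [Nat.cast_zero, zero_mul, add_zero]
    refine sum_congr rfl fun k _ => ?_
    have h : ((k + 1 : ℕ) : R) * (m + 1).choose (k + 1) = (m + 1 : ℕ) * m.choose k := by
      rw [← Nat.cast_mul, ← Nat.cast_mul, mul_comm, ← Nat.add_one_mul_choose_eq]
    rw [Nat.add_sub_add_right, h, pow_succ]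
    ring

theorem sum_Icc_Icc_comm {M : Type*} [AddCommMonoid M] (a b : ℕ) (f : ℕ → ℕ → M) :
    ∑ i ∈ Icc a b, ∑ j ∈ Icc i b, f i j = ∑ j ∈ Icc a b, ∑ i ∈ Icc a j, f i j := by
  simpa only [Ico_add_one_right_eq_Icc] using sum_Ico_Ico_comm a (b + 1) f

section ZeroTruncatedBinomial

variable {K : Type*} [Field K] {p q : K}

/-- With `q = 1 - p`, the law of `Bin(n, p)` conditioned on being nonzero. -/
def zeroTruncatedBinomial (p q : K) (n k : ℕ) : K :=
  n.choose k * p ^ k * q ^ (n - k) / (1 - q ^ n)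

theorem sum_Icc_mul_zeroTruncatedBinomial (hpq : p + q = 1) (n : ℕ) :
    ∑ k ∈ Icc 1 n, (k : K) * zeroTruncatedBinomial p q n k = n * p / (1 - q ^ n) := by
  have hmean := sum_range_mul_choose_mul_pow_mul_pow n p q
  rw [range_eq_Ico, sum_eq_sum_Ico_succ_bot (Nat.succ_pos n : 0 < n + 1), zero_add,
    Nat.succ_eq_add_one, Ico_add_one_right_eq_Icc, Nat.cast_zero, zero_mul, zero_mul, zero_mul,
    zero_add, hpq, one_pow, mul_one] at hmean
  simp only [zeroTruncatedBinomial, mul_div_assoc', ← sum_div, ← mul_assoc, hmean]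

theorem zeroTruncatedBinomial_one (n : ℕ) :
    zeroTruncatedBinomial p q n 1 = n * p * q ^ (n - 1) / (1 - q ^ n) := by
  simp [zeroTruncatedBinomial]

theorem one_div_mul_sum_Icc_mul_zeroTruncatedBinomial_add (hpq : p + q = 1) (hp : p ≠ 0)
    {n : ℕ} (hqn : q ^ n ≠ 1) :
    (1 / p) * ∑ k ∈ Icc 1 n, (k : K) * zeroTruncatedBinomial p q n k
      + (1 - 1 / p) * zeroTruncatedBinomial p q n 1 = n := by
  obtain ⟨m, rfl⟩ : ∃ m, n = m + 1 := Nat.exists_eq_succ_of_ne_zero (by rintro rfl; simp at hqn)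
  have hden : 1 - q ^ (m + 1) ≠ 0 := sub_ne_zero.mpr hqn.symm
  rw [sum_Icc_mul_zeroTruncatedBinomial hpq, zeroTruncatedBinomial_one, Nat.add_sub_cancel]
  obtain rfl : q = 1 - p := eq_sub_of_add_eq' hpq
  field_simp
  ring

end ZeroTruncatedBinomial

theorem stmt_16_general
    (W : ℕ) (p q : ℝ) (hp0 : 0 < p) (hp1 : p < 1) (hq : q = 1 - p)
    (B : ℕ → ℕ → ℝ)
    (hB : ∀ j i, B j i = if j ≤ i then
      (i.choose j : ℝ) * p ^ j * q ^ (i - j) / (1 - q ^ i) else 0)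
    (φ : ℕ → ℝ)
    (d : ℕ → ℝ) (hd : ∀ k, d k = ∑ i ∈ Finset.Icc k W, B k i * φ i)
    : ∑ i ∈ Finset.Icc 1 W, (i : ℝ) * φ i =
      (1 / p) * ∑ k ∈ Finset.Icc 1 W, (k : ℝ) * d k + (1 - 1 / p) * d 1 := by
  have hpq : p + q = 1 := by rw [hq]; ring
  have hB_eq : B = fun j i => zeroTruncatedBinomial p q i j := by
    ext j i
    rw [hB, zeroTruncatedBinomial, ite_eq_left_iff, not_le]
    intro hij
    rw [Nat.choose_eq_zero_of_lt hij, Nat.cast_zero, zero_mul, zero_mul, zero_div]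
  have hcoeff (i : ℕ) (hi : i ∈ Icc 1 W) :
      (1 / p) * ∑ k ∈ Icc 1 i, (k : ℝ) * B k i + (1 - 1 / p) * B 1 i = i := by
    have hqi : q ^ i < 1 :=
      pow_lt_one₀ (by linarith) (by linarith) (Nat.one_le_iff_ne_zero.mp (mem_Icc.mp hi).1)
    simpa only [hB_eq] using
      one_div_mul_sum_Icc_mul_zeroTruncatedBinomial_add hpq hp0.ne' hqi.ne
  simp only [hd, mul_sum, sum_Icc_Icc_comm]
  rw [← sum_add_distrib]
  refine sum_congr rfl fun i hi => ?_
  rw [← hcoeff i hi, add_mul, mul_assoc, sum_mul, mul_sum]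
  simp only [mul_assoc]

theorem stmt_16
    (W : ℕ) (hW : 1 ≤ W) (p q : ℝ) (hp0 : 0 < p) (hp1 : p < 1) (hq : q = 1 - p)
    (B : ℕ → ℕ → ℝ)
    (hB : ∀ j i, B j i = if j ≤ i then
      (i.choose j : ℝ) * p ^ j * q ^ (i - j) / (1 - q ^ i) else 0)
    (φ : ℕ → ℝ) (hφ : ∀ i ∈ Finset.Icc 1 W, 0 < φ i)
    (d : ℕ → ℝ) (hd : ∀ k, d k = ∑ i ∈ Finset.Icc k W, B k i * φ i)
    : ∑ i ∈ Finset.Icc 1 W, (i : ℝ) * φ i =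
      (1 / p) * ∑ k ∈ Finset.Icc 1 W, (k : ℝ) * d k + (1 - 1 / p) * d 1 :=
  stmt_16_general W p q hp0 hp1 hq B hB φ d hd
end
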